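/- arXiv:2409.16397 — 5 statements merged into one kernel-verified Lean document; each statement's English description precedes it below -/
import Mathlib

section
/- Let N ≥ 2 be an integer and let s = s(N) be the smallest positive integer such that every sequence of s units of ℤ/Nℤ contains a nonempty subsequence whose product is 1. Let v and t be integers with v > t > s, and let x₁, …, x_v be units of ℤ/Nℤ. Then there are at least C(v,t)/C(v,s) distinct subsets S ⊆ {1, …, v} with t − s ≤ |S| ≤ t such that ∏_{i ∈ S} x_i = 1, where C(·,·) denotes the binomial coefficient. -/
/-!
Every `s` of the `xᵢ` contain a nonempty product-one subfamily. Removing such subfamilies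
greedily from a `t`-set `T` until fewer than `s` elements remain, the removed pieces form a
product-one subset `S ⊆ T` with `t - s < |S| ≤ t`. A fixed `S` of size `k` lies in only
`C(v - k, t - k) ≤ C(v, s)` of the `t`-sets, so the `C(v, t)` sets `T` produce at least
`C(v, t) / C(v, s)` distinct `S`.
-/

open Finset

theorem Nat.choose_le_choose_add_add (n k d : ℕ) : n.choose k ≤ (n + d).choose (k + d) := by
  induction d with
  | zero => rfl
  | succ d ih =>
    calc n.choose k ≤ (n + d).choose (k + d) := ih
      _ ≤ (n + d + 1).choose (k + d + 1) := by
        rw [Nat.choose_succ_succ]; exact Nat.le_add_right _ _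

theorem Nat.choose_sub_le_choose {n k s t : ℕ} (hkn : k ≤ n) (hkt : k ≤ t) (hst : s ≤ t)
    (htk : t - s ≤ k) : (n - k).choose (t - k) ≤ n.choose s :=
  calc (n - k).choose (t - k) ≤ (n - k + (s + k - t)).choose (t - k + (s + k - t)) :=
        Nat.choose_le_choose_add_add _ _ _
    _ = (n - (t - s)).choose s := by congr 1 <;> omega
    _ ≤ n.choose s := Nat.choose_le_choose s (Nat.sub_le n _)

theorem Finset.choose_le_choose_mul_card_of_forall_exists_subset {α : Type*} [Fintype α]
    [DecidableEq α] {s t : ℕ} (hst : s ≤ t) {G : Finset (Finset α)}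
    (hG : ∀ S ∈ G, t - s ≤ #S ∧ #S ≤ t) (hcover : ∀ T : Finset α, #T = t → ∃ S ∈ G, S ⊆ T) :
    (Fintype.card α).choose t ≤ #G * (Fintype.card α).choose s := by
  have hfiber (S : Finset α) (hS : S ∈ G) :
      #((powersetCard t univ).filter (S ⊆ ·)) ≤ (Fintype.card α).choose s := by
    rw [card_filter_powersetCard_subset S univ t (subset_univ S) (hG S hS).2, card_univ]
    exact Nat.choose_sub_le_choose (card_le_univ S) (hG S hS).2 hst (hG S hS).1
  calc (Fintype.card α).choose t = #(powersetCard t (univ : Finset α)) := by simp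
    _ ≤ #(G.biUnion fun S => (powersetCard t univ).filter (S ⊆ ·)) := by
        refine card_le_card fun T hT => ?_
        obtain ⟨S, hSG, hST⟩ := hcover T (mem_powersetCard_univ.mp hT)
        exact mem_biUnion.mpr ⟨S, hSG, mem_filter.mpr ⟨hT, hST⟩⟩
    _ ≤ ∑ S ∈ G, #((powersetCard t univ).filter (S ⊆ ·)) := card_biUnion_le
    _ ≤ ∑ _S ∈ G, (Fintype.card α).choose s := sum_le_sum hfiber
    _ = #G * (Fintype.card α).choose s := by rw [sum_const, smul_eq_mul]

section ProductOne

variable {ι M : Type*} [CommMonoid M]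

theorem Finset.exists_nonempty_subset_prod_eq_one {s : ℕ}
    (hs : ∀ l : List M, l.length = s → ∃ u : List M, u.Sublist l ∧ u ≠ [] ∧ u.prod = 1)
    (x : ι → M) {T : Finset ι} (hT : #T = s) :
    ∃ P ⊆ T, P.Nonempty ∧ ∏ i ∈ P, x i = 1 := by
  classical
  obtain ⟨u, hu, hu_ne, hu_prod⟩ := hs (T.toList.map x) (by simp [hT])
  obtain ⟨l, hl, rfl⟩ := List.sublist_map_iff.mp hu
  refine ⟨l.toFinset, fun i hi => mem_toList.mp (hl.mem (List.mem_toFinset.mp hi)), ?_, ?_⟩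
  · simpa [List.toFinset_eq_empty_iff, nonempty_iff_ne_empty] using hu_ne
  · rw [List.prod_toFinset x (hl.nodup T.nodup_toList), hu_prod]

theorem Finset.exists_subset_prod_eq_one_card_lt_add [DecidableEq ι] {s : ℕ} {x : ι → M}
    (h : ∀ T : Finset ι, #T = s → ∃ P ⊆ T, P.Nonempty ∧ ∏ i ∈ P, x i = 1) (T : Finset ι) :
    ∃ S ⊆ T, ∏ i ∈ S, x i = 1 ∧ #T < #S + s := by
  induction T using Finset.strongInduction with
  | H T ih =>
    by_cases hT : #T < s
    · exact ⟨∅, empty_subset T, prod_empty, by simpa using hT⟩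
    obtain ⟨T₀, hT₀, hT₀_card⟩ := exists_subset_card_eq (not_lt.mp hT)
    obtain ⟨P, hPT₀, hP, hP_prod⟩ := h T₀ hT₀_card
    have hPT : P ⊆ T := hPT₀.trans hT₀
    obtain ⟨S, hS, hS_prod, hS_card⟩ := ih (T \ P) (sdiff_ssubset hPT hP)
    have hdisj : Disjoint S P := disjoint_of_subset_left hS sdiff_disjoint
    refine ⟨S ∪ P, union_subset (hS.trans sdiff_subset) hPT, ?_, ?_⟩
    · rw [prod_union hdisj, hS_prod, hP_prod, one_mul]
    · rw [card_union_of_disjoint hdisj]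
      rw [card_sdiff_of_subset hPT] at hS_card
      have := card_le_card hPT
      omega

end ProductOne

theorem many_subsets_with_product_one_general (N : ℕ) (s : ℕ)
    (hs : IsLeast {m : ℕ | 0 < m ∧ ∀ l : List (ZMod N)ˣ, l.length = m →
      ∃ t : List (ZMod N)ˣ, t.Sublist l ∧ t ≠ [] ∧ t.prod = 1} s)
    (v t : ℕ) (hts : s < t) (x : Fin v → (ZMod N)ˣ) :
    ((v.choose t : ℝ) / (v.choose s : ℝ)) ≤
      ((Finset.univ.filter (fun S : Finset (Fin v) =>
        t - s ≤ S.card ∧ S.card ≤ t ∧ ∏ i ∈ S, x i = 1)).card : ℝ) := by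
  set G := Finset.univ.filter (fun S : Finset (Fin v) =>
    t - s ≤ S.card ∧ S.card ≤ t ∧ ∏ i ∈ S, x i = 1)
  have hcover (T : Finset (Fin v)) (hT : #T = t) : ∃ S ∈ G, S ⊆ T := by
    obtain ⟨S, hST, hS_prod, hS_card⟩ := exists_subset_prod_eq_one_card_lt_add
      (fun _ => exists_nonempty_subset_prod_eq_one hs.1.2 x) T
    have := card_le_card hST
    exact ⟨S, mem_filter.mpr ⟨mem_univ S, by omega, by omega, hS_prod⟩, hST⟩
  have hcount := choose_le_choose_mul_card_of_forall_exists_subset hts.le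
    (fun S hS => ⟨(mem_filter.mp hS).2.1, (mem_filter.mp hS).2.2.1⟩) hcover
  rw [Fintype.card_fin] at hcount
  exact div_le_of_le_mul₀ (Nat.cast_nonneg _) (Nat.cast_nonneg _) (by exact_mod_cast hcount)

/-- If `s = s(N)` is the smallest positive integer such that every sequence of
`s` units of `ℤ/Nℤ` contains a nonempty subsequence of product `1`, and
`v > t > s`, then for any units `x₁, …, x_v` of `ℤ/Nℤ` there are at least
`C(v,t)/C(v,s)` subsets `S ⊆ {1, …, v}` with `t - s ≤ |S| ≤ t` and
`∏_{i ∈ S} x_i = 1`. -/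
theorem many_subsets_with_product_one (N : ℕ) (hN : 2 ≤ N) (s : ℕ)
    (hs : IsLeast {m : ℕ | 0 < m ∧ ∀ l : List (ZMod N)ˣ, l.length = m →
      ∃ t : List (ZMod N)ˣ, t.Sublist l ∧ t ≠ [] ∧ t.prod = 1} s)
    (v t : ℕ) (hts : s < t) (hvt : t < v) (x : Fin v → (ZMod N)ˣ) :
    ((v.choose t : ℝ) / (v.choose s : ℝ)) ≤
      ((Finset.univ.filter (fun S : Finset (Fin v) =>
        t - s ≤ S.card ∧ S.card ≤ t ∧ ∏ i ∈ S, x i = 1)).card : ℝ) :=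
  many_subsets_with_product_one_general N s hs v t hts x
end

section
/- For all sufficiently large real z, the number of positive divisors g of J = ∏_{r prime, z/2 ≤ r ≤ z} r having exactly ⌊log z⌋ distinct prime factors is at least (z/(15·(log z)²))^{log z}. -/
/-!
Multiplying `k = ⌊log z⌋` of the `m` primes in `[z/2, z]` gives `m.choose k ≥ (m/k)^k` distinct
divisors of `J` with `k` prime factors, so it suffices to show `m ≥ z / (5 log z)`. This is
Erdős' argument for Bertrand's postulate made quantitative: no prime in `(2n/3, n]` divides
`centralBinom n`, primes above `√(2n)` divide it at most once and every prime power dividing it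
is at most `2n`, so `4^n ≤ n · centralBinom n ≤ n · (2n)^√(2n) · 4^(2n/3) · (2n)^π`, where `π`
counts the primes in `(n, 2n]`. Finally `(z / (5 (log z)²))^k ≥ (z / (15 (log z)²))^(log z)`,
the factor `3^k` absorbing the fractional part of `log z`.
-/

open Finset Filter Real

namespace Nat

theorem pow_le_pow_mul_choose {m k : ℕ} (hkm : k ≤ m) : m ^ k ≤ k ^ k * m.choose k := by
  have termwise : ∏ i ∈ range k, m * (k - i) ≤ ∏ i ∈ range k, k * (m - i) :=
    prod_le_prod' fun i _ => by
      rw [Nat.mul_sub, Nat.mul_sub, mul_comm m k]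
      exact Nat.sub_le_sub_left (Nat.mul_le_mul_right i hkm) _
  simp only [prod_mul_distrib, prod_const, card_range, ← descFactorial_eq_prod_range,
    descFactorial_self, descFactorial_eq_factorial_mul_choose] at termwise
  refine le_of_mul_le_mul_right ?_ (factorial_pos k)
  linarith

theorem div_pow_le_choose {m k : ℕ} (hkm : k ≤ m) : ((m : ℝ) / k) ^ k ≤ m.choose k := by
  rcases k.eq_zero_or_pos with rfl | hk
  · simp
  rw [div_pow, div_le_iff₀ (by positivity), mul_comm]
  exact_mod_cast pow_le_pow_mul_choose hkm

theorem choose_card_le_card_filter_divisors_prod {P : Finset ℕ} (hP : ∀ p ∈ P, p.Prime) (k : ℕ) :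
    (#P).choose k ≤ #{g ∈ (∏ p ∈ P, p).divisors | g.primeFactors.card = k} := by
  rw [← card_powersetCard]
  refine card_le_card_of_injOn (fun s => ∏ p ∈ s, p) (fun s hs => ?_) (fun s hs t ht hst => ?_)
  · obtain ⟨hsP, hcard⟩ := mem_powersetCard.1 hs
    simp only [coe_filter, Set.mem_ofPred_eq, mem_divisors]
    refine ⟨⟨prod_dvd_prod_of_subset _ _ _ hsP,
      prod_ne_zero_iff.2 fun p hp => (hP p hp).ne_zero⟩, ?_⟩
    rw [primeFactors_prod fun p hp => hP p (hsP hp), hcard]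
  · rw [← primeFactors_prod fun p hp => hP p ((mem_powersetCard.1 hs).1 hp),
      ← primeFactors_prod fun p hp => hP p ((mem_powersetCard.1 ht).1 hp)]
    exact congrArg primeFactors hst

theorem centralBinom_eq_prod_primesLE_mul_prod_primes_Ioc {n : ℕ} (hn : 2 < n) :
    centralBinom n = (∏ p ∈ primesLE (2 * n / 3), p ^ (centralBinom n).factorization p) *
      ∏ p ∈ Ioc n (2 * n) with p.Prime, p ^ (centralBinom n).factorization p := by
  have hdisj : Disjoint (primesLE (2 * n / 3)) {p ∈ Ioc n (2 * n) | p.Prime} := by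
    refine disjoint_left.2 fun p hp hp' => ?_
    simp only [mem_primesLE, mem_filter, mem_Ioc] at hp hp'
    omega
  rw [← prod_union hdisj]
  refine (prod_subset (fun p hp => ?_) fun p hp hp' => ?_).trans
    (prod_pow_factorization_centralBinom n) |>.symm
  · simp only [mem_union, mem_primesLE, mem_filter, mem_Ioc, mem_range] at hp ⊢
    omega
  · simp only [mem_union, mem_primesLE, mem_filter, mem_Ioc, mem_range] at hp hp'
    by_cases hprime : p.Prime
    · simp only [hprime, and_true] at hp'
      rw [factorization_centralBinom_of_two_mul_self_lt_three_mul hn (by omega) (by omega),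
        pow_zero]
    · rw [factorization_eq_zero_of_not_prime _ hprime, pow_zero]

theorem prod_primesLE_pow_factorization_centralBinom_le (n : ℕ) :
    ∏ p ∈ primesLE (2 * n / 3), p ^ (centralBinom n).factorization p ≤
      (2 * n) ^ sqrt (2 * n) * 4 ^ (2 * n / 3) := by
  rcases n.eq_zero_or_pos with rfl | hn
  · simp
  have termwise : ∀ p ∈ primesLE (2 * n / 3), p ^ (centralBinom n).factorization p ≤
      (if p ≤ sqrt (2 * n) then 2 * n else 1) * p := fun p hp => by
    have hp1 := (prime_of_mem_primesLE hp).one_lt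
    split_ifs with hsqrt
    · exact (pow_factorization_choose_le (by omega)).trans (Nat.le_mul_of_pos_right _ (by omega))
    · rw [one_mul]
      exact (pow_le_pow_right₀ hp1.le
        (factorization_choose_le_one (sqrt_lt'.1 (not_le.1 hsqrt)))).trans (pow_one p).le
  have hcard : #{p ∈ primesLE (2 * n / 3) | p ≤ sqrt (2 * n)} ≤ sqrt (2 * n) := by
    refine (card_le_card fun p hp => ?_).trans (card_Ioc 0 (sqrt (2 * n))).le
    simp only [mem_filter, mem_Ioc] at hp ⊢
    exact ⟨(prime_of_mem_primesLE hp.1).pos, hp.2⟩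
  calc _ ≤ ∏ p ∈ primesLE (2 * n / 3), (if p ≤ sqrt (2 * n) then 2 * n else 1) * p :=
        prod_le_prod' termwise
    _ = (2 * n) ^ #{p ∈ primesLE (2 * n / 3) | p ≤ sqrt (2 * n)} * primorial (2 * n / 3) := by
        rw [prod_mul_distrib, ← prod_filter, prod_const]; rfl
    _ ≤ _ := by
        gcongr
        · omega
        · exact primorial_le_four_pow _

theorem four_pow_le_pow_card_primes_Ioc {n : ℕ} (hn : 4 ≤ n) :
    4 ^ (n - 2 * n / 3) ≤ (2 * n) ^ (#{p ∈ Ioc n (2 * n) | p.Prime} + sqrt (2 * n) + 1) := by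
  have hlarge : ∏ p ∈ Ioc n (2 * n) with p.Prime, p ^ (centralBinom n).factorization p ≤
      (2 * n) ^ #{p ∈ Ioc n (2 * n) | p.Prime} :=
    prod_le_pow_card _ _ _ fun p _ => pow_factorization_choose_le (by omega)
  refine le_of_mul_le_mul_right ?_ (by positivity : 0 < 4 ^ (2 * n / 3))
  rw [← pow_add, Nat.sub_add_cancel (by omega), pow_add, pow_add, pow_one]
  calc 4 ^ n ≤ n * centralBinom n := (four_pow_lt_mul_centralBinom n hn).le
    _ ≤ 2 * n * ((2 * n) ^ sqrt (2 * n) * 4 ^ (2 * n / 3) *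
          (2 * n) ^ #{p ∈ Ioc n (2 * n) | p.Prime}) := by
        rw [centralBinom_eq_prod_primesLE_mul_prod_primes_Ioc (by omega)]
        gcongr
        · omega
        · exact prod_primesLE_pow_factorization_centralBinom_le n
    _ = _ := by ring

end Nat

theorem div_three_mul_log_four_le_card_primes_Ioc_mul_log {n : ℕ} (hn : 4 ≤ n) :
    n / 3 * log 4 ≤ (#{p ∈ Ioc n (2 * n) | p.Prime} + √(2 * n) + 1) * log (2 * n) := by
  have hlog := log_le_log (by positivity)
    (Nat.cast_le (α := ℝ).2 (Nat.four_pow_le_pow_card_primes_Ioc hn))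
  push_cast [Nat.cast_pow, log_pow] at hlog
  have hthird : (n : ℝ) / 3 ≤ ((n - 2 * n / 3 : ℕ) : ℝ) := by
    rw [div_le_iff₀ (by norm_num)]; exact_mod_cast (by omega : n ≤ (n - 2 * n / 3) * 3)
  have hsqrt : ((Nat.sqrt (2 * n) : ℕ) : ℝ) ≤ √(2 * n) := by
    exact_mod_cast Real.nat_sqrt_le_real_sqrt
  have hlog2n : 0 ≤ log (2 * n) := log_nonneg (by norm_cast; omega)
  calc n / 3 * log 4 ≤ ((n - 2 * n / 3 : ℕ) : ℝ) * log 4 := by gcongr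
    _ ≤ _ := hlog
    _ ≤ _ := by gcongr

theorem eventually_le_card_primes_Icc_mul_log :
    ∀ᶠ z : ℝ in atTop, z / 5 ≤ #{p ∈ Icc ⌈z / 2⌉₊ ⌊z⌋₊ | p.Prime} * log z := by
  filter_upwards [(isLittleO_log_rpow_atTop (r := 1 / 2) (by norm_num)).bound
    (c := 1 / 100) (by norm_num), eventually_ge_atTop 100] with z hlog hz
  rw [← sqrt_eq_rpow, norm_of_nonneg (sqrt_nonneg z), norm_of_nonneg (log_nonneg (by linarith))]
    at hlog
  set n := ⌊z / 2⌋₊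
  have hn : z / 2 - 1 ≤ n := (Nat.sub_one_lt_floor _).le
  have h2n : (2 * n : ℝ) ≤ z := by linarith [Nat.floor_le (by linarith : 0 ≤ z / 2)]
  have hsub : #{p ∈ Ioc n (2 * n) | p.Prime} ≤ #{p ∈ Icc ⌈z / 2⌉₊ ⌊z⌋₊ | p.Prime} := by
    refine card_le_card (filter_subset_filter _ fun p hp => ?_)
    have := Nat.ceil_le_floor_add_one (z / 2)
    have : 2 * n ≤ ⌊z⌋₊ := Nat.le_floor (by exact_mod_cast h2n)
    simp only [mem_Ioc, mem_Icc] at hp ⊢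
    omega
  have hchebyshev := div_three_mul_log_four_le_card_primes_Ioc_mul_log
    (Nat.le_floor (by norm_num; linarith) : 4 ≤ n)
  have hlog4 : 1.38 < log 4 := by
    rw [show (4 : ℝ) = 2 ^ 2 by norm_num, log_pow]; push_cast; linarith [log_two_gt_d9]
  have hmain : (z / 2 - 1) / 3 * 1.38 ≤ n / 3 * log 4 :=
    mul_le_mul (by linarith) hlog4.le (by norm_num) (by positivity)
  have hmono : (#{p ∈ Ioc n (2 * n) | p.Prime} + √(2 * n) + 1) * log (2 * n) ≤
      (#{p ∈ Icc ⌈z / 2⌉₊ ⌊z⌋₊ | p.Prime} + √z + 1) * log z := by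
    have : (0 : ℝ) < 2 * n := by linarith
    gcongr
    exact log_nonneg (by linarith)
  have herror : (√z + 1) * log z ≤ z / 50 := by
    have := sq_sqrt (by linarith : 0 ≤ z)
    have : 1 ≤ √z := one_le_sqrt.2 (by linarith)
    nlinarith [log_nonneg (by linarith : 1 ≤ z)]
  linarith

theorem div_exp_one_le_three_pow_floor_log {z : ℝ} (hz : 0 < z) : z / exp 1 ≤ 3 ^ ⌊log z⌋₊ :=
  calc z / exp 1 = exp (log z - 1) := by rw [exp_sub, exp_log hz]
    _ ≤ exp ⌊log z⌋₊ := exp_le_exp.2 (by linarith [Nat.lt_floor_add_one (log z)])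
    _ = exp 1 ^ ⌊log z⌋₊ := by rw [← exp_nat_mul, mul_one]
    _ ≤ 3 ^ ⌊log z⌋₊ := by gcongr; linarith [exp_one_lt_d9]

theorem Real.rpow_le_mul_pow_floor {b c x : ℝ} (hb : 1 ≤ b) (hbc : b ≤ c ^ ⌊x⌋₊) :
    b ^ x ≤ (c * b) ^ ⌊x⌋₊ :=
  calc b ^ x ≤ b ^ ((⌊x⌋₊ + 1 : ℕ) : ℝ) :=
        rpow_le_rpow_of_exponent_le hb (by push_cast; exact (Nat.lt_floor_add_one x).le)
    _ = b * b ^ ⌊x⌋₊ := by rw [rpow_natCast, pow_succ']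
    _ ≤ c ^ ⌊x⌋₊ * b ^ ⌊x⌋₊ := by gcongr
    _ = (c * b) ^ ⌊x⌋₊ := (mul_pow c b _).symm

/-- For all sufficiently large real `z`, the number of divisors `g` of
`J = ∏_{r prime, z/2 ≤ r ≤ z} r` with exactly `⌊log z⌋` distinct prime factors
is at least `(z / (15 (log z)²))^{log z}`. -/
theorem count_divisors_of_J :
    ∀ᶠ z : ℝ in Filter.atTop,
      (z / (15 * (Real.log z) ^ 2)) ^ Real.log z ≤
        (((Nat.divisors (∏ r ∈ (Finset.Icc ⌈z / 2⌉₊ ⌊z⌋₊).filter Nat.Prime, r)).filter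
          (fun g => g.primeFactors.card = ⌊Real.log z⌋₊)).card : ℝ) := by
  filter_upwards [eventually_le_card_primes_Icc_mul_log, eventually_ge_atTop (exp 1),
    (isLittleO_pow_log_id_atTop (n := 2)).bound (c := 1 / 15) (by norm_num)] with z hprimes hz hlog
  set L := log z
  set m := #{p ∈ Icc ⌈z / 2⌉₊ ⌊z⌋₊ | p.Prime}
  set k := ⌊L⌋₊
  set b := z / (15 * L ^ 2)
  have hz0 : 0 < z := (exp_pos 1).trans_le hz
  have hL : 1 ≤ L := (le_log_iff_exp_le hz0).2 hz
  have hk : (1 : ℝ) ≤ k := by exact_mod_cast Nat.le_floor (by exact_mod_cast hL)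
  have hkL : (k : ℝ) ≤ L := Nat.floor_le (by linarith)
  have hb : 1 ≤ b := by
    rw [norm_of_nonneg (by positivity), id_eq, norm_of_nonneg hz0.le] at hlog
    rw [le_div_iff₀ (by positivity)]
    linarith
  have hb3 : b ≤ 3 ^ k :=
    (div_le_div_of_nonneg_left hz0.le (exp_pos 1) (by nlinarith [exp_one_lt_d9])).trans
      (div_exp_one_le_three_pow_floor_log hz0)
  have hbk : 3 * b * k ≤ m :=
    calc 3 * b * k = z / (5 * L) * (k / L) := by simp only [b]; field_simp; ring
      _ ≤ z / (5 * L) * 1 := by gcongr; exact div_le_one_of_le₀ hkL (by linarith)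
      _ ≤ m := by rw [mul_one, div_le_iff₀ (by positivity)]; linarith
  have hkm : k ≤ m := by exact_mod_cast (show (k : ℝ) ≤ m by nlinarith)
  calc b ^ L ≤ (3 * b) ^ k := rpow_le_mul_pow_floor hb hb3
    _ ≤ ((m : ℝ) / k) ^ k := by gcongr; rw [le_div_iff₀ (by linarith)]; exact hbk
    _ ≤ m.choose k := Nat.div_pow_le_choose hkm
    _ ≤ _ := by
        exact_mod_cast Nat.choose_card_le_card_filter_divisors_prod
          (fun p hp => (mem_filter.1 hp).2) k
end

section
/- Let A ≥ 2 be a real number, and assume that for all sufficiently large positive integers l and every integer b coprime to l there is a prime p ≡ b (mod l) with p < l·(log l)^A. Then for all sufficiently large real z there exists a positive integer j ≤ (log z)^{2A} such that the number of primes q of the form q = g·j + 1, where g ∣ J and g has exactly ⌊log z⌋ distinct prime factors, is at least (z/(15·(log z)²))^{log z} / (log z)^{2A}. -/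
/-!
Let `P` be the set of primes in `[z/2, z]` and `k = ⌊log z⌋`. The Chebyshev-type bound coming from
the central binomial coefficient gives `#P ≥ z / (5 log z)`, hence
`C(#P, k) ≥ (#P / k)^k ≥ (z / (15 (log z)²))^(log z)`. For each `k`-subset of `P` with product `g`
we have `g ≥ z/2` and `log g ≤ (log z)²`, so the hypothesis with `b = 1` yields a prime
`p = g j + 1` with `j < (log g)^A ≤ (log z)^(2A)`. By pigeonhole one such `j` is shared by at least
`C(#P, k) / (log z)^(2A)` of the products `g`, which are distinct divisors of `J` with `ω(g) = k`.
-/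

open Finset Real Filter

theorem Nat.div_pow_le_choose_s9 {n k : ℕ} (hkn : k ≤ n) : ((n : ℝ) / k) ^ k ≤ n.choose k := by
  induction k generalizing n with
  | zero => simp
  | succ k ih =>
    obtain ⟨m, rfl⟩ : ∃ m, n = m + 1 := ⟨n - 1, by omega⟩
    have hkm : k ≤ m := by omega
    have hpow : (((m + 1 : ℕ) : ℝ) / (k + 1 : ℕ)) ^ k ≤ m.choose k := by
      rcases k.eq_zero_or_pos with rfl | hk
      · simp
      refine (pow_le_pow_left₀ (by positivity) ?_ k).trans (ih hkm)
      rw [div_le_div_iff₀ (by positivity) (by positivity)]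
      push_cast
      nlinarith [(Nat.cast_le (α := ℝ)).2 hkm]
    calc (((m + 1 : ℕ) : ℝ) / (k + 1 : ℕ)) ^ (k + 1)
        = (m + 1 : ℕ) / (k + 1 : ℕ) * (((m + 1 : ℕ) : ℝ) / (k + 1 : ℕ)) ^ k := _root_.pow_succ' _ _
      _ ≤ (m + 1 : ℕ) / (k + 1 : ℕ) * m.choose k := by gcongr
      _ = (m + 1).choose (k + 1) := by
        rw [div_mul_eq_mul_div, div_eq_iff (by positivity)]
        exact_mod_cast Nat.add_one_mul_choose_eq m k

theorem Finset.exists_le_card_filter_of_forall_exists {α β : Type*} [DecidableEq β]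
    {s : Finset α} {t : Finset β} (ht : t.Nonempty) (p : α → β → Prop) [∀ a b, Decidable (p a b)]
    (h : ∀ a ∈ s, ∃ b ∈ t, p a b) : ∃ b ∈ t, (#s : ℝ) / #t ≤ #{a ∈ s | p a b} := by
  have : Nonempty β := ht.to_subtype.map Subtype.val
  choose! f hft hf using h
  obtain ⟨b, hb, hfib⟩ := exists_le_card_fiber_of_nsmul_le_card_of_maps_to hft ht
    (b := (#s : ℝ) / #t) (by rw [nsmul_eq_mul, mul_div_cancel₀ _ (by simpa using ht.ne_empty)])
  refine ⟨b, hb, hfib.trans ?_⟩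
  exact_mod_cast card_le_card fun a ha => by
    simp only [mem_filter] at ha ⊢; exact ⟨ha.1, ha.2 ▸ hf a ha.1⟩

theorem card_powersetCard_filter_le_card_divisors_filter {P : Finset ℕ} (hP : ∀ p ∈ P, p.Prime)
    (k : ℕ) (q : ℕ → Prop) [DecidablePred q] :
    #{s ∈ powersetCard k P | q (∏ p ∈ s, p)} ≤
      #{g ∈ (∏ p ∈ P, p).divisors | g.primeFactors.card = k ∧ q g} := by
  have hprime : ∀ s ∈ powersetCard k P, ∀ p ∈ s, p.Prime := fun s hs p hp =>
    hP p ((mem_powersetCard.1 hs).1 hp)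
  refine card_le_card_of_injOn (fun s => ∏ p ∈ s, p) (fun s hs => ?_) (fun s hs t ht hst => ?_)
  · simp only [coe_filter, Set.mem_ofPred_eq] at hs ⊢
    refine ⟨Nat.mem_divisors.2 ⟨prod_dvd_prod_of_subset _ _ _ (mem_powersetCard.1 hs.1).1, ?_⟩,
      by rw [Nat.primeFactors_prod (hprime s hs.1), (mem_powersetCard.1 hs.1).2], hs.2⟩
    exact prod_ne_zero_iff.2 fun p hp => (hP p hp).ne_zero
  · simp only [coe_filter, Set.mem_ofPred_eq] at hs ht
    rw [← Nat.primeFactors_prod (hprime s hs.1), ← Nat.primeFactors_prod (hprime t ht.1)]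
    exact congrArg _ hst

namespace Nat

-- the small-prime half of `centralBinom_le_of_no_bertrand_prime`, with the same proof
theorem prod_range_pow_factorization_centralBinom_le {n : ℕ} (hn : 0 < n) :
    ∏ p ∈ range (2 * n / 3 + 1), p ^ (centralBinom n).factorization p ≤
      (2 * n) ^ sqrt (2 * n) * 4 ^ (2 * n / 3) := by
  set f : ℕ → ℕ := fun p => p ^ (centralBinom n).factorization p
  set S := {p ∈ range (2 * n / 3 + 1) | p.Prime}
  have hS : ∏ p ∈ S, f p = ∏ p ∈ range (2 * n / 3 + 1), f p :=
    prod_filter_of_ne fun p _ h => by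
      contrapose! h
      simp [f, factorization_eq_zero_of_not_prime _ h]
  rw [← hS, ← prod_filter_mul_prod_filter_not S (· ≤ sqrt (2 * n))]
  apply Nat.mul_le_mul
  · refine (prod_le_prod' fun p _ => (?_ : f p ≤ 2 * n)).trans ?_
    · exact pow_factorization_choose_le (by omega)
    rw [prod_const]
    refine pow_right_mono₀ (by omega) ((card_le_card fun x hx => ?_).trans (card_Icc 1 _).le)
    obtain ⟨h1, h2⟩ := mem_filter.1 hx
    exact mem_Icc.mpr ⟨(mem_filter.1 h1).2.one_lt.le, h2⟩
  · refine le_trans ?_ (primorial_le_four_pow (2 * n / 3))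
    refine (prod_le_prod' fun p hp => (?_ : f p ≤ p)).trans ?_
    · obtain ⟨h1, h2⟩ := mem_filter.1 hp
      refine (pow_right_mono₀ (mem_filter.1 h1).2.one_lt.le ?_).trans (pow_one p).le
      exact factorization_choose_le_one (sqrt_lt'.mp <| not_le.1 h2)
    exact prod_le_prod_of_subset_of_one_le' (filter_subset _ _)
      fun p hp _ => (mem_filter.1 hp).2.one_lt.le

theorem centralBinom_le_mul_pow_card_primes {n : ℕ} (hn : 2 < n) :
    centralBinom n ≤
      (2 * n) ^ sqrt (2 * n) * 4 ^ (2 * n / 3) * (2 * n) ^ #{p ∈ Ioc n (2 * n) | p.Prime} := by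
  set f : ℕ → ℕ := fun p => p ^ (centralBinom n).factorization p
  set R := range (2 * n / 3 + 1)
  set T := {p ∈ Ioc n (2 * n) | p.Prime}
  have hRT : Disjoint R T := disjoint_left.2 fun p hR hT => by
    simp only [R, T, mem_range, mem_filter, mem_Ioc] at hR hT; omega
  have hsub : R ∪ T ⊆ range (2 * n + 1) := fun p hp => by
    simp only [R, T, mem_union, mem_range, mem_filter, mem_Ioc] at hp ⊢; omega
  -- primes in `(2n/3, n]` do not divide `centralBinom n`
  have hone : ∀ p ∈ range (2 * n + 1), p ∉ R ∪ T → f p = 1 := fun p hp hRT => by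
    simp only [R, T, mem_union, mem_range, mem_filter, mem_Ioc, not_or, not_and] at hp hRT
    by_cases hp' : p.Prime
    · simp [f, factorization_centralBinom_of_two_mul_self_lt_three_mul hn
        (by by_contra!; exact hRT.2 ⟨this, by omega⟩ hp') (by omega)]
    · simp [f, factorization_eq_zero_of_not_prime _ hp']
  rw [← prod_pow_factorization_centralBinom n, ← prod_subset hsub hone, prod_union hRT]
  refine Nat.mul_le_mul (prod_range_pow_factorization_centralBinom_le (by omega)) ?_
  exact (prod_le_prod' fun p _ => pow_factorization_choose_le (by omega)).trans (prod_const _).le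

end Nat

theorem le_card_primes_Ioc_mul_log {n : ℕ} (hn : 4 ≤ n) :
    n * log 4 / 3 - log n - √(2 * n) * log (2 * n) ≤
      #{p ∈ Ioc n (2 * n) | p.Prime} * log (2 * n) := by
  set m := #{p ∈ Ioc n (2 * n) | p.Prime}
  have hbound : (4 : ℝ) ^ n ≤
      n * ((2 * n) ^ Nat.sqrt (2 * n) * 4 ^ (2 * n / 3) * (2 * n) ^ m) := by
    exact_mod_cast (Nat.four_pow_lt_mul_centralBinom n hn).le.trans
      (Nat.mul_le_mul_left n (Nat.centralBinom_le_mul_pow_card_primes (by omega)))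
  have hn0 : (0 : ℝ) < n := by positivity
  have hlog := log_le_log (by positivity) hbound
  rw [log_mul hn0.ne' (by positivity), log_mul (by positivity) (by positivity),
    log_mul (by positivity) (by positivity)] at hlog
  simp only [log_pow] at hlog
  have hsqrt : (Nat.sqrt (2 * n) : ℝ) ≤ √(2 * n) := by exact_mod_cast nat_sqrt_le_real_sqrt
  have hdiv : ((2 * n / 3 : ℕ) : ℝ) ≤ 2 * n / 3 := by exact_mod_cast Nat.cast_div_le
  have hlog2n : 0 ≤ log (2 * n) := log_nonneg (by norm_cast; omega)
  have hlog4 : 0 ≤ log 4 := log_nonneg (by norm_num)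
  linarith [mul_le_mul_of_nonneg_right hsqrt hlog2n, mul_le_mul_of_nonneg_right hdiv hlog4]

theorem eventually_log_le_mul_sqrt {c : ℝ} (hc : 0 < c) : ∀ᶠ x : ℝ in atTop, log x ≤ c * √x := by
  filter_upwards [(isLittleO_log_rpow_atTop one_half_pos).bound hc, eventually_ge_atTop 1]
    with x hx hx1
  rwa [norm_of_nonneg (log_nonneg hx1), norm_of_nonneg (by positivity), ← sqrt_eq_rpow] at hx

theorem eventually_div_le_card_primes_Icc :
    ∀ᶠ z : ℝ in atTop, z / (5 * log z) ≤ ((Icc ⌈z / 2⌉₊ ⌊z⌋₊).filter Nat.Prime).card := by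
  filter_upwards [eventually_ge_atTop 2000, eventually_log_le_mul_sqrt (c := 1 / 200) (by norm_num)]
    with z hz hlog
  set n := ⌊z⌋₊ / 2
  have hn4 : 4 ≤ n := by
    have : 2000 ≤ ⌊z⌋₊ := Nat.le_floor (by exact_mod_cast hz)
    omega
  have hn : z - 2 < 2 * n := by
    have : (⌊z⌋₊ : ℝ) ≤ 2 * n + 1 := by exact_mod_cast (show ⌊z⌋₊ ≤ 2 * n + 1 by omega)
    linarith [Nat.sub_one_lt_floor z]
  have hn' : (2 * n : ℝ) ≤ z := by
    have : (2 * n : ℝ) ≤ ⌊z⌋₊ := by exact_mod_cast (show 2 * n ≤ ⌊z⌋₊ by omega)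
    linarith [Nat.floor_le (show 0 ≤ z by linarith)]
  have hsub : {p ∈ Ioc n (2 * n) | p.Prime} ⊆ (Icc ⌈z / 2⌉₊ ⌊z⌋₊).filter Nat.Prime := by
    intro p hp
    simp only [mem_filter, mem_Ioc, mem_Icc] at hp ⊢
    refine ⟨⟨Nat.ceil_le.2 ?_, by omega⟩, hp.2⟩
    have : (n : ℝ) + 1 ≤ p := by exact_mod_cast hp.1.1
    linarith
  set m := #{p ∈ Ioc n (2 * n) | p.Prime}
  set M := ((Icc ⌈z / 2⌉₊ ⌊z⌋₊).filter Nat.Prime).card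
  have hmM : (m : ℝ) ≤ M := by exact_mod_cast card_le_card hsub
  have hL : 0 < log z := log_pos (by linarith)
  have hn1 : (1 : ℝ) ≤ n := by exact_mod_cast (show 1 ≤ n by omega)
  have hlogn : log n ≤ log z := log_le_log (by linarith) (by linarith)
  have hlog2n : log (2 * n) ≤ log z := log_le_log (by positivity) hn'
  have hlog2n' : 0 ≤ log (2 * n) := log_nonneg (by linarith)
  have hsqrt2n : √(2 * n) ≤ √z := sqrt_le_sqrt hn'
  have hsqrt : √z * √z = z := mul_self_sqrt (by linarith)
  have hlog4 : 1.386 < log 4 := by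
    rw [show (4 : ℝ) = 2 ^ 2 by norm_num, log_pow]
    linarith [log_two_gt_d9]
  rw [div_le_iff₀ (by positivity)]
  nlinarith [le_card_primes_Ioc_mul_log hn4, mul_le_mul hsqrt2n hlog2n hlog2n' (sqrt_nonneg z),
    mul_le_mul_of_nonneg_left hlog2n m.cast_nonneg, mul_le_mul_of_nonneg_right hmM hL.le,
    one_le_sqrt.2 (by linarith : (1 : ℝ) ≤ z)]

theorem rpow_log_le_choose {z : ℝ} {M : ℕ} (hL : 1 ≤ log z) (hz : 15 * log z ^ 2 ≤ z)
    (hM : z / (5 * log z) ≤ M) : (z / (15 * log z ^ 2)) ^ log z ≤ M.choose ⌊log z⌋₊ := by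
  set L := log z
  set k := ⌊L⌋₊
  set X := z / (15 * L ^ 2)
  have hz0 : 0 < z := by nlinarith
  have hX : 1 ≤ X := (one_le_div (by positivity)).2 hz
  have hk : 1 ≤ k := Nat.one_le_floor_iff _ |>.2 hL
  have hk0 : (0 : ℝ) < k := by exact_mod_cast hk
  have hkL : (k : ℝ) ≤ L := Nat.floor_le (by linarith)
  have hLk : L ≤ k + 1 := (Nat.lt_floor_add_one L).le
  have hML : z / (5 * L ^ 2) ≤ M / k := by
    rw [div_le_div_iff₀ (by positivity) hk0]
    rw [div_le_iff₀ (by positivity)] at hM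
    nlinarith
  have hkM : k ≤ M := by
    have hLM : L ≤ z / (5 * L) := by rw [le_div_iff₀ (by positivity)]; nlinarith
    exact_mod_cast hkL.trans (hLM.trans hM)
  -- pays for the fractional part `L - k` of the exponent
  have hz3 : z ≤ 3 ^ (k + 1) := calc
    z = exp L := (exp_log hz0).symm
    _ ≤ exp (k + 1) := exp_le_exp.2 hLk
    _ = exp 1 ^ (k + 1) := by rw [← exp_nat_mul]; push_cast; ring_nf
    _ ≤ 3 ^ (k + 1) := by gcongr; exact exp_one_lt_three.le
  calc X ^ L ≤ X ^ ((k + 1 : ℕ) : ℝ) := rpow_le_rpow_of_exponent_le hX (by push_cast; exact hLk)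
    _ = X ^ k * X := by rw [rpow_natCast, pow_succ]
    _ ≤ X ^ k * 3 ^ k := by
      gcongr
      rw [pow_succ] at hz3
      unfold X
      rw [div_le_iff₀ (by positivity)]
      nlinarith [mul_le_mul_of_nonneg_left (one_le_pow₀ hL : 1 ≤ L ^ 2)
        (pow_nonneg zero_le_three k)]
    _ = (z / (5 * L ^ 2)) ^ k := by rw [← mul_pow]; unfold X; congr 1; field_simp; ring
    _ ≤ (M / k) ^ k := by gcongr
    _ ≤ M.choose k := Nat.div_pow_le_choose_s9 hkM

theorem eventually_exists_prime_mul_add_one {A : ℝ}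
    (hHB : ∀ᶠ l : ℕ in atTop, ∀ b : ℕ, b.Coprime l →
      ∃ p : ℕ, p.Prime ∧ p ≡ b [MOD l] ∧ (p : ℝ) < l * log l ^ A) :
    ∀ᶠ g : ℕ in atTop, ∃ j : ℕ, 0 < j ∧ (j : ℝ) < log g ^ A ∧ (g * j + 1).Prime := by
  filter_upwards [hHB, eventually_gt_atTop 0] with g hg hg0
  obtain ⟨p, hp, hmod, hlt⟩ := hg 1 (Nat.coprime_one_left g)
  obtain ⟨j, hj⟩ := (Nat.modEq_iff_dvd' hp.one_lt.le).1 hmod.symm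
  have hpj : p = g * j + 1 := by have := hp.one_lt; omega
  subst hpj
  refine ⟨j, Nat.pos_of_ne_zero fun h => by simp [h, Nat.not_prime_one] at hp, ?_, hp⟩
  have hg0' : (0 : ℝ) < g := by exact_mod_cast hg0
  push_cast at hlt
  nlinarith

theorem exists_prime_prod_mul_add_one {A : ℝ} (hA : 0 ≤ A) {G : ℕ}
    (hG : ∀ g ≥ G, ∃ j : ℕ, 0 < j ∧ (j : ℝ) < log g ^ A ∧ (g * j + 1).Prime)
    {z : ℝ} (hzG : 2 * G ≤ z) (hz : exp 1 ≤ z) {s : Finset ℕ}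
    (hs : s ⊆ (Icc ⌈z / 2⌉₊ ⌊z⌋₊).filter Nat.Prime) (hcard : #s = ⌊log z⌋₊) :
    ∃ j ∈ Icc 1 ⌊log z ^ (2 * A)⌋₊, ((∏ p ∈ s, p) * j + 1).Prime := by
  set g := ∏ p ∈ s, p
  have hz0 : 0 < z := (exp_pos 1).trans_le hz
  have hL : 1 ≤ log z := (le_log_iff_exp_le hz0).2 hz
  have hfloor : (1 : ℝ) ≤ ⌊z⌋₊ := by
    exact_mod_cast Nat.one_le_floor_iff _ |>.2 (by linarith [add_one_le_exp 1])
  have hmem : ∀ p ∈ s, ⌈z / 2⌉₊ ≤ p ∧ p ≤ ⌊z⌋₊ ∧ p.Prime := fun p hp => by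
    simpa only [mem_filter, mem_Icc, and_assoc] using hs hp
  have hg0 : 0 < g := prod_pos fun p hp => (hmem p hp).2.2.pos
  obtain ⟨p₀, hp₀⟩ : s.Nonempty := card_pos.1 (hcard ▸ Nat.one_le_floor_iff _ |>.2 hL)
  have hzg : z / 2 ≤ g := calc
    z / 2 ≤ ⌈z / 2⌉₊ := Nat.le_ceil _
    _ ≤ p₀ := by exact_mod_cast (hmem p₀ hp₀).1
    _ ≤ g := by exact_mod_cast Nat.le_of_dvd hg0 (dvd_prod_of_mem _ hp₀)
  have hlogg : log g ≤ log z ^ 2 := calc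
    log g ≤ log ((⌊z⌋₊ ^ #s : ℕ) : ℝ) := log_le_log (by exact_mod_cast hg0)
      (by exact_mod_cast prod_le_pow_card s _ _ fun p hp => (hmem p hp).2.1)
    _ = #s * log ⌊z⌋₊ := by push_cast; rw [log_pow]
    _ ≤ log z * log z := mul_le_mul (hcard ▸ Nat.floor_le (by linarith))
      (log_le_log (by linarith) (Nat.floor_le hz0.le)) (log_nonneg hfloor) (by linarith)
    _ = log z ^ 2 := (sq _).symm
  obtain ⟨j, hj0, hjlt, hprime⟩ := hG g (by exact_mod_cast (show (G : ℝ) ≤ g by linarith))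
  refine ⟨j, mem_Icc.2 ⟨hj0, Nat.le_floor ?_⟩, hprime⟩
  calc (j : ℝ) ≤ log g ^ A := hjlt.le
    _ ≤ (log z ^ 2) ^ A := rpow_le_rpow (log_nonneg (by exact_mod_cast hg0)) hlogg hA
    _ = log z ^ (2 * A) := by rw [← rpow_natCast, ← rpow_mul (by linarith)]; norm_num

/-- Assuming the strong Heath-Brown conjecture with exponent `A`, for all
sufficiently large real `z` there is a positive integer `j ≤ (log z)^{2A}`
such that the number of primes `q = g·j + 1` with `g ∣ J` and
`ω(g) = ⌊log z⌋` is at least `(z / (15 (log z)²))^{log z} / (log z)^{2A}`. -/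
theorem exists_good_j (A : ℝ) (hA : 2 ≤ A)
    (hHB : ∀ᶠ l : ℕ in Filter.atTop, ∀ b : ℕ, Nat.Coprime b l →
      ∃ p : ℕ, p.Prime ∧ p ≡ b [MOD l] ∧ (p : ℝ) < (l : ℝ) * (Real.log l) ^ A) :
    ∀ᶠ z : ℝ in Filter.atTop, ∃ j : ℕ, 0 < j ∧ (j : ℝ) ≤ (Real.log z) ^ (2 * A) ∧
      (z / (15 * (Real.log z) ^ 2)) ^ Real.log z / (Real.log z) ^ (2 * A) ≤
        (((Nat.divisors (∏ r ∈ (Finset.Icc ⌈z / 2⌉₊ ⌊z⌋₊).filter Nat.Prime, r)).filter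
          (fun g => g.primeFactors.card = ⌊Real.log z⌋₊ ∧ (g * j + 1).Prime)).card : ℝ) := by
  obtain ⟨G, hG⟩ := eventually_atTop.1 (eventually_exists_prime_mul_add_one hHB)
  filter_upwards [eventually_div_le_card_primes_Icc, eventually_ge_atTop (2 * G : ℝ),
    eventually_ge_atTop (exp 1), eventually_log_le_mul_sqrt (c := 1 / 4) (by norm_num)]
    with z hM hzG hz hlog
  set P := (Icc ⌈z / 2⌉₊ ⌊z⌋₊).filter Nat.Prime
  have hL : 1 ≤ log z := (le_log_iff_exp_le ((exp_pos 1).trans_le hz)).2 hz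
  have hz15 : 15 * log z ^ 2 ≤ z := by
    nlinarith [mul_self_sqrt ((exp_pos 1).trans_le hz).le, sqrt_nonneg z]
  have hB : 1 ≤ ⌊log z ^ (2 * A)⌋₊ := Nat.one_le_floor_iff _ |>.2 (one_le_rpow hL (by linarith))
  obtain ⟨j, hj, hcount⟩ := exists_le_card_filter_of_forall_exists
    (s := powersetCard ⌊log z⌋₊ P) (t := Icc 1 ⌊log z ^ (2 * A)⌋₊)
    (nonempty_Icc.2 hB) (fun s j => ((∏ p ∈ s, p) * j + 1).Prime)
    fun s hs => exists_prime_prod_mul_add_one (by linarith) hG hzG hz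
      (mem_powersetCard.1 hs).1 (mem_powersetCard.1 hs).2
  refine ⟨j, (mem_Icc.1 hj).1, (Nat.le_floor_iff (by positivity)).1 (mem_Icc.1 hj).2, ?_⟩
  calc (z / (15 * log z ^ 2)) ^ log z / log z ^ (2 * A)
      ≤ (#P).choose ⌊log z⌋₊ / ⌊log z ^ (2 * A)⌋₊ :=
        div_le_div₀ (by positivity) (rpow_log_le_choose hL hz15 hM) (by exact_mod_cast hB)
          (Nat.floor_le (by positivity))
    _ = #(powersetCard ⌊log z⌋₊ P) / #(Icc 1 ⌊log z ^ (2 * A)⌋₊) := by simp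
    _ ≤ _ := hcount
    _ ≤ _ := by
      exact_mod_cast card_powersetCard_filter_le_card_divisors_filter
        (fun p hp => (mem_filter.1 hp).2) _ (fun g => (g * j + 1).Prime)
end

section
/- For all sufficiently large real z the following holds: if N ≥ 2 is an integer such that the exponent λ(N) of the unit group (ℤ/Nℤ)^× satisfies λ(N) ≤ e^{(5/6)·z} and log N ≤ z^{4·log z}, then every finite sequence of at least e^z units of ℤ/Nℤ contains a nonempty subsequence whose product is 1; equivalently, s(N) < e^z. -/
/-!
Take `k ≈ z^{4 log z} ≥ log N` and look at the `k`-element subsets of the sequence. There are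
`C(n, k)` of them but only `φ(N) ≤ N` possible products, so many of them, more than `(λk)^k`,
share a product `g`. In such a family either `λ` members are pairwise disjoint, and their union
has product `g^λ = 1`, or a maximal disjoint subfamily covers fewer than `λk` elements that meet
every member; one of these elements lies in more than `(λ(k-1))^(k-1)` members, and removing it
gives a family of `(k-1)`-sets with a common product, to which the same argument applies.
The bounds `λ ≤ e^{5z/6}`, `log N ≤ z^{4 log z}` and `n ≥ e^z` make `N (λk)^k < C(n, k)`.
-/

open Finset Real Filter

section ZeroProduct

variable {ι : Type*} [DecidableEq ι]

lemma exists_maximal_pairwiseDisjoint_subset (F : Finset (Finset ι)) :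
    ∃ D ⊆ F, (D : Set (Finset ι)).PairwiseDisjoint id ∧
      ∀ A ∈ F, A.Nonempty → ¬Disjoint A (D.biUnion id) := by
  classical
  set disjointSubfamilies := F.powerset.filter
    fun D : Finset (Finset ι) => (D : Set (Finset ι)).PairwiseDisjoint id
  obtain ⟨D, hD, hmax⟩ :=
    exists_max_image disjointSubfamilies card ⟨∅, by simp [disjointSubfamilies]⟩
  rw [mem_filter, mem_powerset] at hD
  refine ⟨D, hD.1, hD.2, fun A hA hA₀ hdisj => ?_⟩
  have hAD : A ∉ D := fun hAD =>
    hA₀.ne_empty (disjoint_self.mp ((disjoint_biUnion_right _ _ _).mp hdisj A hAD))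
  have hins : insert A D ∈ disjointSubfamilies := by
    rw [mem_filter, mem_powerset, coe_insert]
    exact ⟨insert_subset hA hD.1,
      hD.2.insert fun B hB _ => (disjoint_biUnion_right _ _ _).mp hdisj B hB⟩
  have hle := hmax _ hins
  rw [card_insert_of_notMem hAD] at hle
  omega

lemma exists_lt_card_filter_mem {F : Finset (Finset ι)} {U : Finset ι}
    (hU : ∀ A ∈ F, ¬Disjoint A U) {c : ℕ} (h : #U * c < #F) :
    ∃ x ∈ U, c < #{A ∈ F | x ∈ A} := by
  have hcover : F ⊆ U.biUnion fun x => {A ∈ F | x ∈ A} := by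
    intro A hA
    obtain ⟨x, hxA, hxU⟩ := not_disjoint_iff.mp (hU A hA)
    exact mem_biUnion.mpr ⟨x, hxU, mem_filter.mpr ⟨hA, hxA⟩⟩
  refine exists_lt_of_sum_lt ?_
  rw [sum_const, smul_eq_mul]
  exact h.trans_le ((card_le_card hcover).trans card_biUnion_le)

variable {G : Type*} [CommGroup G]

lemma exists_prod_eq_one_of_card_gt {m : ℕ} (hm : 0 < m) (hpow : ∀ x : G, x ^ m = 1)
    (f : ι → G) {k : ℕ} {g : G} {F : Finset (Finset ι)} (hcard : ∀ A ∈ F, #A = k)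
    (hprod : ∀ A ∈ F, ∏ i ∈ A, f i = g) (hF : (m * k) ^ k < #F) :
    ∃ S : Finset ι, S.Nonempty ∧ ∏ i ∈ S, f i = 1 := by
  induction k generalizing g F with
  | zero =>
    have : #F ≤ 1 := card_le_one.mpr fun A hA B hB => by
      rw [card_eq_zero.mp (hcard A hA), card_eq_zero.mp (hcard B hB)]
    rw [pow_zero] at hF
    omega
  | succ k ih =>
    have hne : ∀ A ∈ F, A.Nonempty := fun A hA => card_pos.mp (by rw [hcard A hA]; omega)
    obtain ⟨D, hDF, hD, hmeet⟩ := exists_maximal_pairwiseDisjoint_subset F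
    by_cases hDm : m ≤ #D
    · obtain ⟨E, hED, hE⟩ := exists_subset_card_eq hDm
      refine ⟨E.biUnion id, ?_, ?_⟩
      · obtain ⟨A, hA⟩ := card_pos.mp (hE ▸ hm)
        exact (hne A (hDF (hED hA))).mono (subset_biUnion_of_mem id hA)
      · rw [prod_biUnion (hD.subset hED), prod_eq_pow_card (b := g), hE, hpow]
        exact fun A hA => hprod A (hDF (hED hA))
    · push Not at hDm
      have hU : #(D.biUnion id) * (m * k) ^ k < #F := calc
        _ ≤ #D * (k + 1) * (m * (k + 1)) ^ k := by
          gcongr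
          · exact card_biUnion_le_card_mul D id (k + 1) fun A hA => (hcard A (hDF hA)).le
          · omega
        _ < m * (k + 1) * (m * (k + 1)) ^ k := by gcongr
        _ = (m * (k + 1)) ^ (k + 1) := by ring
        _ < #F := hF
      obtain ⟨x, -, hx⟩ := exists_lt_card_filter_mem (fun A hA => hmeet A hA (hne A hA)) hU
      refine ih (g := (f x)⁻¹ * g) (F := {A ∈ F | x ∈ A}.image (·.erase x)) ?_ ?_ ?_
      · simp only [forall_mem_image, mem_filter, and_imp]
        intro A hA hxA
        rw [card_erase_of_mem hxA, hcard A hA, Nat.add_sub_cancel]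
      · simp only [forall_mem_image, mem_filter, and_imp]
        intro A hA hxA
        rw [← hprod A hA, ← mul_prod_erase A f hxA, inv_mul_cancel_left]
      · rwa [card_image_of_injOn]
        exact (erase_injOn' x).mono fun A hA => (mem_filter.mp hA).2

lemma List.exists_sublist_length_eq_prod_eq {α : Type*} [CommMonoid α] (l : List α)
    (S : Finset (Fin l.length)) :
    ∃ t : List α, t.Sublist l ∧ t.length = #S ∧ t.prod = ∏ i ∈ S, l.get i := by
  have hS : ((List.finRange l.length).filter (· ∈ S) : Multiset _) = S.val := by
    conv_rhs => rw [← filter_univ_mem S, filter_val, Fin.univ_def]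
    simp
  refine ⟨((List.finRange l.length).filter (· ∈ S)).map l.get, ?_, ?_, ?_⟩
  · simpa using (List.filter_sublist (l := List.finRange l.length)).map l.get
  · rw [List.length_map, ← Multiset.coe_card, hS, card_val]
  · rw [prod_eq_multiset_prod, ← hS, Multiset.map_coe, Multiset.prod_coe]

theorem List.exists_sublist_prod_eq_one_of_card_mul_lt_choose [Fintype G] {m k : ℕ} (hm : 0 < m)
    (hpow : ∀ x : G, x ^ m = 1) (l : List G)
    (h : Fintype.card G * (m * k) ^ k < l.length.choose k) :
    ∃ t : List G, t.Sublist l ∧ t ≠ [] ∧ t.prod = 1 := by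
  classical
  obtain ⟨g, -, hg⟩ := exists_lt_card_fiber_of_mul_lt_card_of_maps_to
    (s := powersetCard k univ) (t := univ) (f := fun A => ∏ i ∈ A, l.get i)
    (fun _ _ => mem_univ _) (by rwa [card_powersetCard, card_fin, card_univ])
  obtain ⟨S, hS, hprod⟩ := exists_prod_eq_one_of_card_gt hm hpow l.get (hF := hg)
    (fun A hA => mem_powersetCard_univ.mp (mem_filter.mp hA).1)
    (fun A hA => by simpa using (mem_filter.mp hA).2)
  obtain ⟨t, hsub, hlen, ht⟩ := l.exists_sublist_length_eq_prod_eq S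
  exact ⟨t, hsub, List.ne_nil_of_length_pos (hlen ▸ hS.card_pos), ht.trans hprod⟩

end ZeroProduct

lemma Nat.div_two_mul_pow_le_choose {α : Type*} [Field α] [LinearOrder α]
    [IsStrictOrderedRing α] {n k : ℕ} (h : 2 * k ≤ n) :
    ((n : α) / (2 * k)) ^ k ≤ n.choose k := calc
  ((n : α) / (2 * k)) ^ k = ((n : α) / 2) ^ k / (k : α) ^ k := by rw [← div_pow, div_div]
  _ ≤ ((n + 1 - k : ℕ) : α) ^ k / k.factorial := by
    gcongr
    · rw [Nat.cast_sub (by omega)]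
      push_cast
      linarith [(show (2 * k : α) ≤ n by exact_mod_cast h)]
    · exact_mod_cast Nat.factorial_le_pow k
  _ ≤ n.choose k := Nat.pow_le_choose k n

lemma natCast_mul_pow_lt_choose {N m n k : ℕ} {z L : ℝ} (hz : 12 < z) (hm : 0 < m)
    (hmz : (m : ℝ) ≤ exp (5 / 6 * z)) (hN : (N : ℝ) ≤ exp L) (hk : 0 < k) (hLk : L ≤ k)
    (hkz : 2 * (k : ℝ) ^ 2 ≤ exp (z / 12)) (hn : exp z ≤ n) :
    N * (m * k) ^ k < n.choose k := by
  have hk' : (1 : ℝ) ≤ k := by exact_mod_cast hk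
  have hexp : exp (z / 12) ≤ exp z := exp_le_exp.mpr (by linarith)
  have h2k : 2 * k ≤ n := by exact_mod_cast (show (2 * k : ℝ) ≤ n by nlinarith)
  have hstep : exp (z / 12) * (m * k) ≤ n / (2 * k) := by
    rw [le_div_iff₀ (by positivity)]
    calc exp (z / 12) * (m * k) * (2 * k) = 2 * (k : ℝ) ^ 2 * m * exp (z / 12) := by ring
      _ ≤ exp (z / 12) * exp (5 / 6 * z) * exp (z / 12) := by gcongr
      _ = exp z := by rw [← exp_add, ← exp_add]; ring_nf
      _ ≤ n := hn
  have hL : L < k * (z / 12) := by nlinarith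
  suffices (N : ℝ) * (m * k) ^ k < n.choose k by exact_mod_cast this
  calc (N : ℝ) * (m * k) ^ k ≤ exp L * (m * k) ^ k := by gcongr
    _ < exp (k * (z / 12)) * (m * k) ^ k := by gcongr
    _ = (exp (z / 12) * (m * k)) ^ k := by rw [exp_nat_mul, ← mul_pow]
    _ ≤ (n / (2 * k)) ^ k := by gcongr
    _ ≤ n.choose k := Nat.div_two_mul_pow_le_choose h2k

lemma eventually_eight_mul_sq_rpow_log_le_exp :
    ∀ᶠ z : ℝ in atTop, 8 * (z ^ (4 * log z)) ^ 2 ≤ exp (z / 12) := by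
  filter_upwards [(isLittleO_pow_log_id_atTop (n := 2)).bound (c := 1 / 192) (by norm_num),
    eventually_ge_atTop 168] with z hlog hz
  rw [norm_of_nonneg (sq_nonneg _), id, norm_of_nonneg (by linarith)] at hlog
  have hlog8 : log 8 ≤ 7 := by linarith [log_le_sub_one_of_pos (show (0 : ℝ) < 8 by norm_num)]
  calc 8 * (z ^ (4 * log z)) ^ 2 = exp (log 8 + 8 * log z ^ 2) := by
        rw [rpow_def_of_pos (by linarith), ← exp_nat_mul, exp_add, exp_log (by norm_num)]
        ring_nf
    _ ≤ exp (z / 12) := exp_le_exp.mpr (by linarith)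

/-- For all sufficiently large real `z`: if `N ≥ 2` has `λ(N) ≤ e^{(5/6)z}`
and `log N ≤ z^{4 log z}`, then every sequence of at least `e^z` units of
`ℤ/Nℤ` contains a nonempty subsequence whose product is `1`
(equivalently, `s(N) < e^z`). -/
theorem s_bound :
    ∀ᶠ z : ℝ in Filter.atTop, ∀ N : ℕ, 2 ≤ N →
      (Monoid.exponent (ZMod N)ˣ : ℝ) ≤ Real.exp ((5 / 6) * z) →
      Real.log N ≤ z ^ (4 * Real.log z) →
      ∀ l : List (ZMod N)ˣ, Real.exp z ≤ (l.length : ℝ) →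
        ∃ t : List (ZMod N)ˣ, t.Sublist l ∧ t ≠ [] ∧ t.prod = 1 := by
  filter_upwards [eventually_gt_atTop 12, eventually_eight_mul_sq_rpow_log_le_exp]
    with z hz hLz N hN hexp hlogN l hl
  have : NeZero N := ⟨by omega⟩
  have hexp_pos : 0 < Monoid.exponent (ZMod N)ˣ :=
    Nat.pos_of_ne_zero Monoid.exponent_ne_zero_of_finite
  set L := z ^ (4 * log z)
  have hL : 1 ≤ L :=
    one_le_rpow (by linarith) (by have := log_nonneg (by linarith : 1 ≤ z); positivity)
  have hkL : (⌈L⌉₊ : ℝ) ≤ 2 * L := by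
    linarith [Nat.ceil_lt_add_one (by linarith : 0 ≤ L)]
  have hNL : (N : ℝ) ≤ exp L := by
    rwa [← log_le_iff_le_exp (by exact_mod_cast (by omega : 0 < N))]
  refine l.exists_sublist_prod_eq_one_of_card_mul_lt_choose (k := ⌈L⌉₊) hexp_pos
    Monoid.pow_exponent_eq_one ?_
  calc Fintype.card (ZMod N)ˣ * _ ≤ N * _ := by
        gcongr
        exact (ZMod.card_units_eq_totient N).trans_le (Nat.totient_le N)
    _ < _ := natCast_mul_pow_lt_choose hz hexp_pos hexp hNL (Nat.ceil_pos.mpr (by linarith))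
        (Nat.le_ceil L) (by nlinarith) hl
end

section
/- Let z ≥ 2 be a real number. Suppose g and g′ are squarefree positive integers all of whose prime factors r satisfy z/2 ≤ r ≤ z, and j and j′ are positive integers with j < z/2 and j′ < z/2. If g·j = g′·j′, then g = g′ and j = j′. -/
lemma coprime_aux (z : ℝ) (g j' : ℕ) (hg : Squarefree g)
    (hgr : ∀ r ∈ g.primeFactors, z / 2 ≤ (r : ℝ) ∧ (r : ℝ) ≤ z)
    (hj' : 0 < j') (hj'z : (j' : ℝ) < z / 2) : Nat.Coprime g j' := by
  rw [Nat.coprime_iff_gcd_eq_one]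
  by_contra h
  obtain ⟨p, hp, hpd⟩ := Nat.exists_prime_and_dvd h
  have hpg : p ∣ g := hpd.trans (Nat.gcd_dvd_left _ _)
  have hpj : p ∣ j' := hpd.trans (Nat.gcd_dvd_right _ _)
  have hmem : p ∈ g.primeFactors := Nat.mem_primeFactors.2 ⟨hp, hpg, hg.ne_zero⟩
  have h1 := (hgr p hmem).1
  have h2 : (p : ℝ) ≤ j' := by exact_mod_cast Nat.le_of_dvd hj' hpj
  linarith

/-- Disjointness property: if `g, g'` are squarefree with all prime factors in
`[z/2, z]` and `j, j' < z/2` are positive, then `g·j = g'·j'` forces `g = g'`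
and `j = j'`. -/
theorem factorization_unique (z : ℝ) (hz : 2 ≤ z) (g g' j j' : ℕ)
    (hg : Squarefree g) (hg' : Squarefree g')
    (hgr : ∀ r ∈ g.primeFactors, z / 2 ≤ (r : ℝ) ∧ (r : ℝ) ≤ z)
    (hgr' : ∀ r ∈ g'.primeFactors, z / 2 ≤ (r : ℝ) ∧ (r : ℝ) ≤ z)
    (hj : 0 < j) (hj' : 0 < j')
    (hjz : (j : ℝ) < z / 2) (hj'z : (j' : ℝ) < z / 2)
    (heq : g * j = g' * j') :
    g = g' ∧ j = j' := by
  have hc : Nat.Coprime g j' := coprime_aux z g j' hg hgr hj' hj'z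
  have hc' : Nat.Coprime g' j := coprime_aux z g' j hg' hgr' hj hjz
  have hdvd : g ∣ g' * j' := heq ▸ Dvd.intro j rfl
  have h1 : g ∣ g' := (Nat.Coprime.dvd_of_dvd_mul_right hc) hdvd
  have hdvd' : g' ∣ g * j := heq ▸ Dvd.intro j' rfl
  have h2 : g' ∣ g := (Nat.Coprime.dvd_of_dvd_mul_right hc') hdvd'
  have hgg : g = g' := Nat.dvd_antisymm h1 h2
  refine ⟨hgg, ?_⟩
  have hg0 : 0 < g := Nat.pos_of_ne_zero hg.ne_zero
  subst hgg
  exact Nat.eq_of_mul_eq_mul_left hg0 heq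
end
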